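/- arXiv:1708.01764 — 3 statements merged into one kernel-verified Lean document; each statement's English description precedes it below -/
import Mathlib

section
/- For infinitesimal stochastic transformations V₁ = (Y₁,C₁,τ₁) and V₂ = (Y₂,C₂,τ₂) on M, their Lie bracket (induced from the bracket of the associated vector fields on M × G × ℝ₊) is given by [V₁,V₂] = ([Y₁,Y₂], Y₁(C₂) − Y₂(C₁) − {C₁,C₂}, Y₁(τ₂) − Y₂(τ₁)), where {·,·} is the Lie bracket of the Lie algebra g of G. -/
/-- The Lie bracket of two vector fields on a normed space:
`[f,g](x) = Dg_x(f(x)) − Df_x(g(x))`. -/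
noncomputable def vfBracket {F : Type*} [NormedAddCommGroup F] [NormedSpace ℝ F]
    (f g : F → F) (x : F) : F :=
  fderiv ℝ g x (f x) - fderiv ℝ f x (g x)

/-- The vector field on `M × G × ℝ₊` associated with an infinitesimal stochastic
transformation `V = (Y,C,τ)`, in the Banach-algebra model of the Lie group `G ⊆ Aˣ`:
at `(x,g,r)` it is `(Y(x), C(x)·g, τ(x)·r)` (the middle term is `R_{g*}(C(x))`). -/
noncomputable def assocVF {E A : Type*} [NormedAddCommGroup E] [NormedSpace ℝ E]
    [NormedRing A] [NormedAlgebra ℝ A]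
    (Y : E → E) (C : E → A) (τ : E → ℝ) : E × A × ℝ → E × A × ℝ :=
  fun p => (Y p.1, C p.1 * p.2.1, τ p.1 * p.2.2)


open ContinuousLinearMap in
lemma fderiv_assocVF_apply {E A : Type*} [NormedAddCommGroup E] [NormedSpace ℝ E]
    [NormedRing A] [NormedAlgebra ℝ A]
    (Y : E → E) (C : E → A) (τ : E → ℝ)
    (hY : ContDiff ℝ (⊤ : ℕ∞) Y) (hC : ContDiff ℝ (⊤ : ℕ∞) C) (hτ : ContDiff ℝ (⊤ : ℕ∞) τ)
    (p v : E × A × ℝ) :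
    fderiv ℝ (assocVF Y C τ) p v =
      (fderiv ℝ Y p.1 v.1, fderiv ℝ C p.1 v.1 * p.2.1 + C p.1 * v.2.1,
       fderiv ℝ τ p.1 v.1 * p.2.2 + τ p.1 * v.2.2) := by
  have hfst : HasFDerivAt (fun q : E × A × ℝ => q.1) (fst ℝ E (A × ℝ)) p := hasFDerivAt_fst
  have hsnd1 : HasFDerivAt (fun q : E × A × ℝ => q.2.1)
      ((fst ℝ A ℝ).comp (snd ℝ E (A × ℝ))) p := hasFDerivAt_fst.comp p hasFDerivAt_snd
  have hsnd2 : HasFDerivAt (fun q : E × A × ℝ => q.2.2)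
      ((snd ℝ A ℝ).comp (snd ℝ E (A × ℝ))) p := hasFDerivAt_snd.comp p hasFDerivAt_snd
  have h1 : HasFDerivAt (fun q : E × A × ℝ => Y q.1)
      ((fderiv ℝ Y p.1).comp (fst ℝ E (A × ℝ))) p :=
    ((hY.differentiable (by simp) p.1).hasFDerivAt).comp p hfst
  have hCc : HasFDerivAt (fun q : E × A × ℝ => C q.1)
      ((fderiv ℝ C p.1).comp (fst ℝ E (A × ℝ))) p :=
    ((hC.differentiable (by simp) p.1).hasFDerivAt).comp p hfst
  have hτc : HasFDerivAt (fun q : E × A × ℝ => τ q.1)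
      ((fderiv ℝ τ p.1).comp (fst ℝ E (A × ℝ))) p :=
    ((hτ.differentiable (by simp) p.1).hasFDerivAt).comp p hfst
  have h2 := hCc.mul' hsnd1
  have h3 := hτc.mul' hsnd2
  have H := (HasFDerivAt.prodMk h1 (HasFDerivAt.prodMk h2 h3)).fderiv
  have : assocVF Y C τ = fun q : E × A × ℝ =>
      (Y q.1, C q.1 * q.2.1, τ q.1 * q.2.2) := rfl
  simp only [Pi.mul_def] at H
  rw [this, H]
  simp [mul_comm]
  exact ⟨add_comm _ _, add_comm _ _⟩

/-- for infinitesimal stochastic transformations `V₁ = (Y₁,C₁,τ₁)` and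
`V₂ = (Y₂,C₂,τ₂)` on `M`, the Lie bracket of the associated vector fields on `M × G × ℝ₊`
is the vector field associated with
`([Y₁,Y₂], Y₁(C₂) − Y₂(C₁) − {C₁,C₂}, Y₁(τ₂) − Y₂(τ₁))`,
where `{·,·}` is the Lie bracket (commutator) of the Lie algebra of `G`. -/
theorem bracket_of_infinitesimal_stochastic_transformations
    {E A : Type*} [NormedAddCommGroup E] [NormedSpace ℝ E]
    [NormedRing A] [NormedAlgebra ℝ A]
    (Y₁ Y₂ : E → E) (C₁ C₂ : E → A) (τ₁ τ₂ : E → ℝ)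
    (hY₁ : ContDiff ℝ (⊤ : ℕ∞) Y₁) (hY₂ : ContDiff ℝ (⊤ : ℕ∞) Y₂)
    (hC₁ : ContDiff ℝ (⊤ : ℕ∞) C₁) (hC₂ : ContDiff ℝ (⊤ : ℕ∞) C₂)
    (hτ₁ : ContDiff ℝ (⊤ : ℕ∞) τ₁) (hτ₂ : ContDiff ℝ (⊤ : ℕ∞) τ₂) :
    vfBracket (assocVF Y₁ C₁ τ₁) (assocVF Y₂ C₂ τ₂)
      = assocVF (vfBracket Y₁ Y₂)
          (fun x => fderiv ℝ C₂ x (Y₁ x) - fderiv ℝ C₁ x (Y₂ x)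
                      - (C₁ x * C₂ x - C₂ x * C₁ x))
          (fun x => fderiv ℝ τ₂ x (Y₁ x) - fderiv ℝ τ₁ x (Y₂ x)) := by
  funext p
  unfold vfBracket
  rw [fderiv_assocVF_apply Y₂ C₂ τ₂ hY₂ hC₂ hτ₂ p (assocVF Y₁ C₁ τ₁ p),
      fderiv_assocVF_apply Y₁ C₁ τ₁ hY₁ hC₁ hτ₁ p (assocVF Y₂ C₂ τ₂ p)]
  simp only [assocVF, vfBracket, Prod.mk_sub_mk]
  refine Prod.ext rfl (Prod.ext ?_ ?_)
  · simp; noncomm_ring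
  · simp; ring
end

section
/- The push-forward of an infinitesimal stochastic transformation V = (Y,C,τ) ∈ V_G(M) by a stochastic transformation T = (Φ,B,η) ∈ S_G(M,M') is given by T_*(V) = (Φ_*(Y), (Ad_B(C) + R_{B⁻¹*}(Y(B))) ∘ Φ⁻¹, (τ + Y(η)η⁻¹) ∘ Φ⁻¹), and satisfies the functoriality T'_*(T_*(V)) = (T'∘T)_*(V). -/
private lemma fderiv_mul_apply' {E A : Type*} [NormedAddCommGroup E] [NormedSpace ℝ E]
    [NormedRing A] [NormedAlgebra ℝ A] {c d : E → A} {x : E}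
    (hc : DifferentiableAt ℝ c x) (hd : DifferentiableAt ℝ d x) (v : E) :
    fderiv ℝ (fun y => c y * d y) x v
      = c x * fderiv ℝ d x v + fderiv ℝ c x v * d x := by
  rw [show (fun y => c y * d y) = c * d from rfl, (hc.hasFDerivAt.mul' hd.hasFDerivAt).fderiv]
  simp [smul_eq_mul]

private lemma fderiv_comp_apply' {E E' F : Type*} [NormedAddCommGroup E] [NormedSpace ℝ E]
    [NormedAddCommGroup E'] [NormedSpace ℝ E'] [NormedAddCommGroup F] [NormedSpace ℝ F]
    {g : E' → F} {f : E → E'} {x : E}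
    (hg : DifferentiableAt ℝ g (f x)) (hf : DifferentiableAt ℝ f x) (v : E) :
    fderiv ℝ (fun y => g (f y)) x v = fderiv ℝ g (f x) (fderiv ℝ f x v) := by
  rw [show (fun y => g (f y)) = g ∘ f from rfl, fderiv_comp x hg hf]; rfl

private lemma alg_lemma {A : Type*} [Ring A] (b' bi' b bi c db db' : A) (h : b * bi = 1) :
    b' * (b * c * bi + db * bi) * bi' + db' * bi'
      = b' * b * c * (bi * bi') + (b' * db + db' * b) * (bi * bi') := by
  have h2 : db' * b * (bi * bi') = db' * bi' := by
    rw [mul_assoc db' b, ← mul_assoc b, h, one_mul]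
  rw [add_mul (b' * db), h2]
  noncomm_ring

/-- Push-forward of an infinitesimal stochastic transformation `V = (Y,C,τ)` by a stochastic
transformation `T = (Φ,B,η)` (Banach-algebra model of the Lie group `G ⊆ Aˣ`, with `Binv`
the pointwise inverse of `B`):
`T_*(V) = (Φ_*(Y), (Ad_B(C) + R_{B⁻¹*}(Y(B))) ∘ Φ⁻¹, (τ + Y(η)η⁻¹) ∘ Φ⁻¹)`, i.e.
`(x' ↦ DΦ(Y)(Φ⁻¹x'), x' ↦ (B C B⁻¹ + (DB(Y))B⁻¹)(Φ⁻¹x'), x' ↦ (τ + Dη(Y)/η)(Φ⁻¹x'))`. -/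
noncomputable def pushfwd {E E' A : Type*}
    [NormedAddCommGroup E] [NormedSpace ℝ E] [NormedAddCommGroup E'] [NormedSpace ℝ E']
    [NormedRing A] [NormedAlgebra ℝ A]
    (Φ : E ≃ E') (B Binv : E → A) (η : E → ℝ)
    (Y : E → E) (C : E → A) (τ : E → ℝ) :
    (E' → E') × (E' → A) × (E' → ℝ) :=
  ( fun x' => fderiv ℝ (⇑Φ) (Φ.symm x') (Y (Φ.symm x')),
    fun x' => B (Φ.symm x') * C (Φ.symm x') * Binv (Φ.symm x')
                + fderiv ℝ B (Φ.symm x') (Y (Φ.symm x')) * Binv (Φ.symm x'),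
    fun x' => τ (Φ.symm x') + fderiv ℝ η (Φ.symm x') (Y (Φ.symm x')) / η (Φ.symm x') )

/-- the push-forward of infinitesimal stochastic transformations is functorial:
`T'_*(T_*(V)) = (T'∘T)_*(V)`, where `T'∘T = (Φ'∘Φ, (B'∘Φ)·B, (η'∘Φ)·η)`. -/
theorem pushforward_functorial
    {E E' E'' A : Type*}
    [NormedAddCommGroup E] [NormedSpace ℝ E] [NormedAddCommGroup E'] [NormedSpace ℝ E']
    [NormedAddCommGroup E''] [NormedSpace ℝ E'']
    [NormedRing A] [NormedAlgebra ℝ A]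
    (Φ : E ≃ E') (B Binv : E → A) (η : E → ℝ)
    (Φ' : E' ≃ E'') (B' B'inv : E' → A) (η' : E' → ℝ)
    (Y : E → E) (C : E → A) (τ : E → ℝ)
    (hΦ : ContDiff ℝ (⊤ : ℕ∞) (⇑Φ)) (hΦs : ContDiff ℝ (⊤ : ℕ∞) (⇑Φ.symm))
    (hΦ' : ContDiff ℝ (⊤ : ℕ∞) (⇑Φ')) (hΦ's : ContDiff ℝ (⊤ : ℕ∞) (⇑Φ'.symm))
    (hB : ContDiff ℝ (⊤ : ℕ∞) B) (hB' : ContDiff ℝ (⊤ : ℕ∞) B')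
    (hBinv : ∀ x, B x * Binv x = 1 ∧ Binv x * B x = 1)
    (hB'inv : ∀ x', B' x' * B'inv x' = 1 ∧ B'inv x' * B' x' = 1)
    (hη : ContDiff ℝ (⊤ : ℕ∞) η) (hη' : ContDiff ℝ (⊤ : ℕ∞) η')
    (hηpos : ∀ x, 0 < η x) (hη'pos : ∀ x', 0 < η' x')
    (hY : ContDiff ℝ (⊤ : ℕ∞) Y) (hC : ContDiff ℝ (⊤ : ℕ∞) C) (hτ : ContDiff ℝ (⊤ : ℕ∞) τ) :
    pushfwd Φ' B' B'inv η'
        (pushfwd Φ B Binv η Y C τ).1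
        (pushfwd Φ B Binv η Y C τ).2.1
        (pushfwd Φ B Binv η Y C τ).2.2
      = pushfwd (Φ.trans Φ')
          (fun x => B' (Φ x) * B x) (fun x => Binv x * B'inv (Φ x))
          (fun x => η' (Φ x) * η x) Y C τ := by
  have dΦ : Differentiable ℝ ⇑Φ := hΦ.differentiable (by simp)
  have dΦ' : Differentiable ℝ ⇑Φ' := hΦ'.differentiable (by simp)
  have dB : Differentiable ℝ B := hB.differentiable (by simp)
  have dB' : Differentiable ℝ B' := hB'.differentiable (by simp)
  have dη : Differentiable ℝ η := hη.differentiable (by simp)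
  have dη' : Differentiable ℝ η' := hη'.differentiable (by simp)
  simp only [pushfwd, Prod.mk.injEq]
  refine ⟨?_, ?_, ?_⟩ <;> funext x'' <;>
    simp only [Equiv.symm_trans_apply] <;>
    set x := Φ.symm (Φ'.symm x'') with hx <;>
    have hy : Φ x = Φ'.symm x'' := Φ.apply_symm_apply _
  · rw [show ⇑(Φ.trans Φ') = (fun a => Φ' (Φ a)) from rfl,
      fderiv_comp_apply' (dΦ' _) (dΦ _), hy]
  · have dc : DifferentiableAt ℝ (fun y => B' (Φ y)) x := (dB' _).comp x (dΦ x)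
    rw [fderiv_mul_apply' dc (dB x),
      fderiv_comp_apply' (dB' _) (dΦ x), hy]
    exact alg_lemma _ _ _ _ _ _ _ (hBinv x).1
  · have dc : DifferentiableAt ℝ (fun y => η' (Φ y)) x := (dη' _).comp x (dΦ x)
    rw [fderiv_mul_apply' dc (dη x),
      fderiv_comp_apply' (dη' _) (dΦ x), hy]
    have h1 : η x ≠ 0 := (hηpos x).ne'
    have h2 : η' (Φ'.symm x'') ≠ 0 := (hη'pos _).ne'
    field_simp
    ring
end

section
/- Let Ψ : M × ℝⁿ → M be given by the Marcus map Ψ(x,z) = exp(z^α Y_α)(x), where Y₁,...,Y_n are complete smooth vector fields on M. Then ∂_{z^α}Ψ^i(x,0) = Y^i_α(x) and ∂_{z^α z^β}Ψ^i(x,0) = ½(Y_β(Y^i_α)(x) + Y_α(Y^i_β)(x)); consequently the geometrical SDE defined by Ψ̄(x,z',z) = Ψ(x,z'−z) coincides with the Marcus-type SDE defined by Y₁,...,Y_n. -/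
open Set Metric Bornology

/-- Scaling property of the flow: `φ z c x = φ (c • z) 1 x`. -/
lemma marcus_scale {m n : ℕ} (Y : Fin n → (Fin m → ℝ) → (Fin m → ℝ))
    (hY : ∀ α, ContDiff ℝ (⊤ : ℕ∞) (Y α))
    (φ : (Fin n → ℝ) → ℝ → (Fin m → ℝ) → (Fin m → ℝ))
    (hflow : ∀ (z : Fin n → ℝ) (x : Fin m → ℝ) (t : ℝ),
      HasDerivAt (fun s => φ z s x) (∑ α, z α • Y α (φ z t x)) t)
    (hinit : ∀ (z : Fin n → ℝ) (x : Fin m → ℝ), φ z 0 x = x)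
    (z : Fin n → ℝ) (c : ℝ) (x : Fin m → ℝ) :
    φ z c x = φ (c • z) 1 x := by
  set V : (Fin m → ℝ) → (Fin m → ℝ) := fun y => ∑ α, (c • z) α • Y α y with hVdef
  have hVsm : ContDiff ℝ (⊤ : ℕ∞) V := ContDiff.sum fun α _ => (hY α).const_smul ((c • z) α)
  set f : ℝ → (Fin m → ℝ) := fun s => φ z (c * s) x with hfdef
  set g : ℝ → (Fin m → ℝ) := fun s => φ (c • z) s x with hgdef
  have hfd : ∀ s, HasDerivAt f (V (f s)) s := by
    intro s
    have h1 : HasDerivAt (fun u : ℝ => c * u) c s := by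
      simpa using (hasDerivAt_id s).const_mul c
    have h2 := (hflow z x (c * s)).scomp s h1
    refine h2.congr_deriv ?_
    simp [hVdef, hfdef, Finset.smul_sum, smul_smul, Function.comp]
  have hgd : ∀ s, HasDerivAt g (V (g s)) s := fun s => hflow (c • z) x s
  have hfc : Continuous f := Differentiable.continuous fun s => (hfd s).differentiableAt
  have hgc : Continuous g := Differentiable.continuous fun s => (hgd s).differentiableAt
  obtain ⟨R, hR⟩ := (((isCompact_Icc (a := (-1:ℝ)) (b := 2)).image hfc).union
    ((isCompact_Icc (a := (-1:ℝ)) (b := 2)).image hgc)).isBounded.subset_closedBall 0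
  have hcont : Continuous fun y : Fin m → ℝ => ‖fderiv ℝ V y‖₊ :=
    (hVsm.continuous_fderiv (by simp)).nnnorm
  have hne : (closedBall (0 : Fin m → ℝ) R).Nonempty := by
    refine ⟨f 0, hR (Or.inl ⟨0, by norm_num, rfl⟩)⟩
  obtain ⟨y₀, _, hy₀⟩ := (isCompact_closedBall (0 : Fin m → ℝ) R).exists_isMaxOn hne
    hcont.continuousOn
  have hlip : LipschitzOnWith (‖fderiv ℝ V y₀‖₊) V (closedBall 0 R) :=
    (convex_closedBall 0 R).lipschitzOnWith_of_nnnorm_hasFDerivWithin_le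
      (fun y _ => ((hVsm.differentiable (by simp) y).hasFDerivAt).hasFDerivWithinAt)
      (fun y hy => hy₀ hy)
  have key := ODE_solution_unique_of_mem_Icc
    (v := fun _ : ℝ => V) (s := fun _ : ℝ => closedBall (0 : Fin m → ℝ) R)
    (fun _ _ => hlip) (t₀ := 0) (a := -1) (b := 2) (by norm_num)
    hfc.continuousOn (fun t _ => hfd t)
    (fun t ht => hR (Or.inl ⟨t, Ioo_subset_Icc_self ht, rfl⟩))
    hgc.continuousOn (fun t _ => hgd t)
    (fun t ht => hR (Or.inr ⟨t, Ioo_subset_Icc_self ht, rfl⟩))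
    (by simp [hfdef, hgdef, hinit])
  have h1 := key (by norm_num : (1:ℝ) ∈ Icc (-1:ℝ) 2)
  simpa [hfdef, hgdef] using h1

/-- let `Ψ(x,z) = exp(z^α Y_α)(x)` be the Marcus map, i.e. `Ψ(x,z) = φ(z,1,x)`
where `φ(z,·,x)` is the flow of the vector field `z^α Y_α`. Then
`∂_{z^α}Ψ(x,0) = Y_α(x)` and `∂_{z^α z^β}Ψ(x,0) = ½(Y_β(Y_α) + Y_α(Y_β))(x)`; consequently
the geometrical SDE defined by `Ψ̄(x,z',z) = Ψ(x,z'−z)` has exactly the Marcus coefficients,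
and its jump term satisfies `Ψ̄(x,z',z) − Ψ̄(x,z,z) = Ψ(x,z'−z) − x`. -/
theorem marcus_map_derivatives
    {m n : ℕ} (Y : Fin n → (Fin m → ℝ) → (Fin m → ℝ))
    (hY : ∀ α, ContDiff ℝ (⊤ : ℕ∞) (Y α))
    (φ : (Fin n → ℝ) → ℝ → (Fin m → ℝ) → (Fin m → ℝ))
    (hflow : ∀ (z : Fin n → ℝ) (x : Fin m → ℝ) (t : ℝ),
      HasDerivAt (fun s => φ z s x) (∑ α, z α • Y α (φ z t x)) t)
    (hinit : ∀ (z : Fin n → ℝ) (x : Fin m → ℝ), φ z 0 x = x)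
    (hsmooth : ContDiff ℝ (⊤ : ℕ∞) (fun p : (Fin n → ℝ) × (Fin m → ℝ) => φ p.1 1 p.2)) :
    (∀ (x : Fin m → ℝ) (α : Fin n),
      fderiv ℝ (fun z => φ z 1 x) 0 (Pi.single α 1) = Y α x) ∧
    (∀ (x : Fin m → ℝ) (α β : Fin n),
      fderiv ℝ (fun z => fderiv ℝ (fun w => φ w 1 x) z (Pi.single α 1)) 0 (Pi.single β 1)
        = (1 / 2 : ℝ) • (fderiv ℝ (Y α) x (Y β x) + fderiv ℝ (Y β) x (Y α x))) ∧
    (∀ (x : Fin m → ℝ) (z z' : Fin n → ℝ),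
      φ (z' - z) 1 x - φ (z - z) 1 x = φ (z' - z) 1 x - x) := by
  have hscale := marcus_scale Y hY φ hflow hinit
  have hF0 : ∀ x : Fin m → ℝ, φ 0 1 x = x := by
    intro x
    have h := hscale 0 0 x
    rw [hinit, smul_zero] at h
    exact h.symm
  have hFsm : ∀ x : Fin m → ℝ, ContDiff ℝ (⊤ : ℕ∞) (fun z => φ z 1 x) := fun x =>
    hsmooth.comp (contDiff_id.prodMk contDiff_const)
  have hFdiff : ∀ x : Fin m → ℝ, Differentiable ℝ (fun z => φ z 1 x) := fun x =>
    (hFsm x).differentiable (by simp)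
  -- single-sums
  have hsingle : ∀ (g : Fin n → (Fin m → ℝ)) (α : Fin n),
      (∑ γ, (Pi.single α 1 : Fin n → ℝ) γ • g γ) = g α := by
    intro g α
    rw [Finset.sum_eq_single α]
    · simp
    · intro b _ hb; simp [Pi.single_eq_of_ne hb]
    · simp
  -- key identity: derivative along rays
  have hstar : ∀ (x : Fin m → ℝ) (z : Fin n → ℝ) (t : ℝ),
      fderiv ℝ (fun w => φ w 1 x) (t • z) z = ∑ α, z α • Y α (φ (t • z) 1 x) := by
    intro x z t
    have hinner : HasDerivAt (fun s : ℝ => s • z) z t := by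
      simpa using (hasDerivAt_id t).smul_const z
    have hB : HasDerivAt (fun s : ℝ => φ (s • z) 1 x)
        (fderiv ℝ (fun w => φ w 1 x) (t • z) z) t :=
      by have h := ((hFdiff x (t • z)).hasFDerivAt).comp_hasDerivAt t hinner; exact h
    have hA : HasDerivAt (fun s : ℝ => φ (s • z) 1 x)
        (∑ α, z α • Y α (φ (t • z) 1 x)) t := by
      have h := hflow z x t
      simp only [hscale z] at h
      exact h
    exact (hB.unique hA)
  have hd1 : ∀ (x : Fin m → ℝ) (z : Fin n → ℝ),
      fderiv ℝ (fun w => φ w 1 x) 0 z = ∑ α, z α • Y α x := by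
    intro x z
    have h := hstar x z 0
    rw [zero_smul, hF0] at h
    exact h
  refine ⟨?_, ?_, ?_⟩
  · intro x α
    rw [hd1 x (Pi.single α 1), hsingle (fun γ => Y γ x) α]
  · intro x α β
    set u : Fin n → ℝ := Pi.single α 1 with hu
    set v : Fin n → ℝ := Pi.single β 1 with hv
    have hGsm : ContDiff ℝ (⊤ : ℕ∞) (fderiv ℝ (fun w => φ w 1 x)) :=
      (hFsm x).fderiv_right (by simp)
    set G : (Fin n → ℝ) → (Fin n → ℝ) →L[ℝ] (Fin m → ℝ) :=
      fderiv ℝ (fun w => φ w 1 x) with hG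
    set B : (Fin n → ℝ) →L[ℝ] (Fin n → ℝ) →L[ℝ] (Fin m → ℝ) := fderiv ℝ G 0 with hBdef
    -- the target is `B v u`
    have htarget : fderiv ℝ (fun z => fderiv ℝ (fun w => φ w 1 x) z u) 0 v = B v u := by
      rw [show (fun z => fderiv ℝ (fun w => φ w 1 x) z u) = fun z => G z u from rfl]
      rw [fderiv_clm_apply (hGsm.differentiable (by simp) 0)
        (differentiableAt_const u)]
      simp
      rfl
    -- the quadratic form of B
    have hq : ∀ z : Fin n → ℝ,
        B z z = ∑ γ, z γ • (fderiv ℝ (Y γ) x) (∑ δ, z δ • Y δ x) := by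
      intro z
      have hinner : HasDerivAt (fun s : ℝ => s • z) z 0 := by
        simpa using (hasDerivAt_id (0:ℝ)).smul_const z
      have hGd : HasDerivAt (fun s : ℝ => G (s • z)) (B z) 0 := by
        have h := ((hGsm.differentiable (by simp) ((0:ℝ) • z)).hasFDerivAt).comp_hasDerivAt 0 hinner
        rw [zero_smul] at h
        exact h
      have hL : HasDerivAt (fun s : ℝ => G (s • z) z) (B z z) 0 := by
        have h := hGd.clm_apply (hasDerivAt_const 0 z)
        simpa using h
      have hφd : HasDerivAt (fun s : ℝ => φ (s • z) 1 x) (∑ δ, z δ • Y δ x) 0 := by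
        have h := ((hFdiff x ((0:ℝ) • z)).hasFDerivAt).comp_hasDerivAt 0 hinner
        rw [zero_smul] at h
        rw [hd1 x z] at h
        exact h
      have hR : HasDerivAt (fun s : ℝ => ∑ γ, z γ • Y γ (φ (s • z) 1 x))
          (∑ γ, z γ • (fderiv ℝ (Y γ) x) (∑ δ, z δ • Y δ x)) 0 := by
        apply HasDerivAt.fun_sum
        intro γ _
        have hYd : HasFDerivAt (Y γ) (fderiv ℝ (Y γ) x) (φ ((0:ℝ) • z) 1 x) := by
          rw [zero_smul, hF0]
          exact ((hY γ).differentiable (by simp) x).hasFDerivAt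
        exact (hYd.comp_hasDerivAt 0 hφd).const_smul (z γ)
      have hfun : (fun s : ℝ => G (s • z) z) = fun s : ℝ => ∑ γ, z γ • Y γ (φ (s • z) 1 x) := by
        funext s
        exact hstar x z s
      rw [hfun] at hL
      exact hL.unique hR
    -- symmetry of B
    have hsym : ∀ p q : Fin n → ℝ, B p q = B q p :=
      second_derivative_symmetric (f := fun w => φ w 1 x) (f' := G) (f'' := B)
        (fun y => (hFdiff x y).hasFDerivAt) (hGsm.differentiable (by simp) 0).hasFDerivAt
    -- compute the polarization
    have hSu : (∑ δ, u δ • Y δ x) = Y α x := hsingle (fun δ => Y δ x) α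
    have hSv : (∑ δ, v δ • Y δ x) = Y β x := hsingle (fun δ => Y δ x) β
    have hquu : B u u = fderiv ℝ (Y α) x (Y α x) := by
      rw [hq u, hSu, hsingle (fun γ => (fderiv ℝ (Y γ) x) (Y α x)) α]
    have hqvv : B v v = fderiv ℝ (Y β) x (Y β x) := by
      rw [hq v, hSv, hsingle (fun γ => (fderiv ℝ (Y γ) x) (Y β x)) β]
    have hquv : B (u + v) (u + v) = fderiv ℝ (Y α) x (Y α x) + fderiv ℝ (Y α) x (Y β x)
        + fderiv ℝ (Y β) x (Y α x) + fderiv ℝ (Y β) x (Y β x) := by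
      rw [hq (u + v)]
      have hS : (∑ δ, (u + v) δ • Y δ x) = Y α x + Y β x := by
        simp only [Pi.add_apply, add_smul, Finset.sum_add_distrib, hSu, hSv]
      rw [hS]
      simp only [hu, hv, Pi.add_apply, add_smul, Finset.sum_add_distrib,
        hsingle (fun γ => (fderiv ℝ (Y γ) x) (Y α x + Y β x)) α,
        hsingle (fun γ => (fderiv ℝ (Y γ) x) (Y α x + Y β x)) β]
      simp only [map_add]
      abel
    have hexp : B (u + v) (u + v) = B u u + (B u v + B v u) + B v v := by
      simp only [map_add, ContinuousLinearMap.add_apply]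
      abel
    have hBsum : B u v + B v u = fderiv ℝ (Y α) x (Y β x) + fderiv ℝ (Y β) x (Y α x) := by
      have h := hquv
      rw [hexp, hquu, hqvv] at h
      have h2 : B u v + B v u =
          fderiv ℝ (Y α) x (Y α x) + fderiv ℝ (Y α) x (Y β x)
            + fderiv ℝ (Y β) x (Y α x) + fderiv ℝ (Y β) x (Y β x)
            - fderiv ℝ (Y α) x (Y α x) - fderiv ℝ (Y β) x (Y β x) := by
        rw [← h]; abel
      rw [h2]; abel
    rw [htarget, hsym v u]
    have : B u v = (1 / 2 : ℝ) • (B u v + B v u) := by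
      rw [hsym u v, ← two_smul ℝ (B v u), smul_smul]
      norm_num
    rw [this, hBsum]
  · intro x z z'
    rw [sub_self, hF0]
end
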